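/- arXiv:1607.04072 — 2 statements merged into one kernel-verified Lean document; each statement's English description precedes it below -/
import Mathlib

section
/- Filter length variation (Thm 4): Let M = KQ = LN and let G : ZMod M → ℂ be frequency confined (G(i) = 0 for Q ≤ i ≤ M-1) and satisfy the orthogonality conditions (1/N) Σ_{s=0}^{N-1} |G(p+sL)|² = 1 for all p ∈ {0,...,L-1} and (1/N) Σ_{s=0}^{N-1} G(p+sL) conj(G(p+sL+kQ)) = 0 for all p and all k ∈ {1,...,K-1}. For a positive integer α, define G_α : ZMod (αM) → ℂ by G_α(i) = √α · G(i) for 0 ≤ i ≤ Q-1 and G_α(i) = 0 otherwise. Then G_α satisfies the corresponding orthogonality conditions for parameters (αK, αN, αM): (1/(αN)) Σ_{s=0}^{αN-1} |G_α(p+sL)|² = 1 for all p ∈ {0,...,L-1} and (1/(αN)) Σ_{s=0}^{αN-1} G_α(p+sL) conj(G_α(p+sL+kQ)) = 0 for all p ∈ {0,...,L-1}, k ∈ {1,...,αK-1}. -/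
open Finset

/-- Filter length variation: extending a frequency-confined orthogonal pulse by
zero-padding (scaled by `√α`) yields an orthogonal pulse for parameters
`(αK, αN, αM)`. -/
theorem stmt_11 (M K Q L N α : ℕ) (hKQ : M = K * Q) (hLN : M = L * N)
    (hK : 0 < K) (hQ : 0 < Q) (hL : 0 < L) (hN : 0 < N) (hα : 0 < α)
    (G : ZMod M → ℂ)
    (hconf : ∀ i : ZMod M, Q ≤ i.val → G i = 0)
    (hISI : ∀ p < L, (1 / (N : ℂ)) * ∑ s ∈ Finset.range N,
        G ((p + s * L : ℕ) : ZMod M) * (starRingEnd ℂ) (G ((p + s * L : ℕ) : ZMod M)) = 1)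
    (hICI : ∀ p < L, ∀ k, 1 ≤ k → k < K →
        (1 / (N : ℂ)) * ∑ s ∈ Finset.range N,
          G ((p + s * L : ℕ) : ZMod M) *
            (starRingEnd ℂ) (G ((p + s * L + k * Q : ℕ) : ZMod M)) = 0)
    (Gα : ZMod (α * M) → ℂ)
    (hGα : ∀ i : ZMod (α * M),
      Gα i = if i.val < Q then (Real.sqrt α : ℂ) * G ((i.val : ℕ) : ZMod M) else 0) :
    (∀ p < L, (1 / ((α * N : ℕ) : ℂ)) * ∑ s ∈ Finset.range (α * N),
        Gα ((p + s * L : ℕ) : ZMod (α * M)) *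
          (starRingEnd ℂ) (Gα ((p + s * L : ℕ) : ZMod (α * M))) = 1) ∧
    (∀ p < L, ∀ k, 1 ≤ k → k < α * K →
        (1 / ((α * N : ℕ) : ℂ)) * ∑ s ∈ Finset.range (α * N),
          Gα ((p + s * L : ℕ) : ZMod (α * M)) *
            (starRingEnd ℂ) (Gα ((p + s * L + k * Q : ℕ) : ZMod (α * M))) = 0) := by
  have hM : 0 < M := hKQ ▸ Nat.mul_pos hK hQ
  have hαM : 0 < α * M := Nat.mul_pos hα hM
  haveI : NeZero M := ⟨hM.ne'⟩
  haveI : NeZero (α * M) := ⟨hαM.ne'⟩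
  have hQM : Q ≤ M := by
    calc Q = 1 * Q := (one_mul Q).symm
    _ ≤ K * Q := Nat.mul_le_mul_right Q hK
    _ = M := hKQ.symm
  -- generic bound: p < L, s < c*N implies p + s*L < c*M
  have hbound : ∀ (c p s : ℕ), p < L → s < c * N → p + s * L < c * M := by
    intro c p s hp hs
    calc p + s * L < (s + 1) * L := by rw [add_mul, one_mul]; omega
    _ ≤ (c * N) * L := Nat.mul_le_mul_right L hs
    _ = c * M := by rw [hLN]; ring
  constructor
  · -- ISI
    intro p hp
    have hsum : ∑ s ∈ Finset.range (α * N),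
        Gα ((p + s * L : ℕ) : ZMod (α * M)) *
          (starRingEnd ℂ) (Gα ((p + s * L : ℕ) : ZMod (α * M)))
      = (α : ℂ) * ∑ s ∈ Finset.range N,
        G ((p + s * L : ℕ) : ZMod M) * (starRingEnd ℂ) (G ((p + s * L : ℕ) : ZMod M)) := by
      rw [Finset.mul_sum]
      rw [← Finset.sum_subset (Finset.range_subset_range.2 (Nat.le_mul_of_pos_left N hα))
        (by
          intro s hs hns
          have hs1 : s < α * N := Finset.mem_range.1 hs
          have hs2 : N ≤ s := le_of_not_gt (fun h => hns (Finset.mem_range.2 h))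
          have hge : Q ≤ p + s * L := by
            calc Q ≤ M := hQM
            _ = L * N := hLN
            _ = N * L := by ring
            _ ≤ s * L := Nat.mul_le_mul_right L hs2
            _ ≤ p + s * L := Nat.le_add_left _ _
          have hlt : p + s * L < α * M := hbound α p s hp hs1
          have hval : ((p + s * L : ℕ) : ZMod (α * M)).val = p + s * L :=
            ZMod.val_cast_of_lt hlt
          rw [hGα, hval, if_neg (by omega)]
          simp)]
      apply Finset.sum_congr rfl
      intro s hs
      have hs' : s < N := Finset.mem_range.1 hs
      have hltM : p + s * L < M := by
        have := hbound 1 p s hp (by omega)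
        omega
      have hlt : p + s * L < α * M := by
        calc p + s * L < M := hltM
        _ ≤ α * M := Nat.le_mul_of_pos_left M hα
      have hval : ((p + s * L : ℕ) : ZMod (α * M)).val = p + s * L :=
        ZMod.val_cast_of_lt hlt
      have hvalM : ((p + s * L : ℕ) : ZMod M).val = p + s * L :=
        ZMod.val_cast_of_lt hltM
      by_cases hq : p + s * L < Q
      · rw [hGα, hval, if_pos hq]
        rw [map_mul, Complex.conj_ofReal]
        have hsq : (Real.sqrt α : ℂ) * (Real.sqrt α : ℂ) = (α : ℂ) := by
          rw [← Complex.ofReal_mul, Real.mul_self_sqrt (by positivity)]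
          norm_cast
        linear_combination (G ((p + s * L : ℕ) : ZMod M) *
          (starRingEnd ℂ) (G ((p + s * L : ℕ) : ZMod M))) * hsq
      · rw [hGα, hval, if_neg hq]
        have hz : G ((p + s * L : ℕ) : ZMod M) = 0 := hconf _ (by rw [hvalM]; omega)
        rw [hz]
        simp
    rw [hsum]
    have hS := hISI p hp
    set S := ∑ s ∈ Finset.range N,
        G ((p + s * L : ℕ) : ZMod M) * (starRingEnd ℂ) (G ((p + s * L : ℕ) : ZMod M)) with hSdef
    have hNne : (N : ℂ) ≠ 0 := Nat.cast_ne_zero.2 hN.ne'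
    have hSval : S = (N : ℂ) := by
      field_simp at hS
      linear_combination hS
    rw [hSval]
    have hαne : (α : ℂ) ≠ 0 := Nat.cast_ne_zero.2 hα.ne'
    push_cast
    field_simp
  · -- ICI: every term vanishes
    intro p hp k hk1 hk2
    have hzero : ∑ s ∈ Finset.range (α * N),
        Gα ((p + s * L : ℕ) : ZMod (α * M)) *
          (starRingEnd ℂ) (Gα ((p + s * L + k * Q : ℕ) : ZMod (α * M))) = 0 := by
      apply Finset.sum_eq_zero
      intro s hs
      have hs' : s < α * N := Finset.mem_range.1 hs
      have hlt1 : p + s * L < α * M := hbound α p s hp hs'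
      have hval1 : ((p + s * L : ℕ) : ZMod (α * M)).val = p + s * L :=
        ZMod.val_cast_of_lt hlt1
      by_cases hq : p + s * L < Q
      · -- second factor vanishes: Q ≤ p+sL+kQ < αM
        have hkQ : k * Q ≤ α * M - Q := by
          have : k * Q ≤ (α * K - 1) * Q := Nat.mul_le_mul_right Q (by omega)
          have hE : (α * K - 1) * Q = α * M - Q := by
            have : α * M = α * K * Q := by rw [hKQ]; ring
            rw [this, Nat.sub_mul, one_mul]
          omega
        have hlt2 : p + s * L + k * Q < α * M := by
          have hQle : Q ≤ α * M := le_trans hQM (Nat.le_mul_of_pos_left M hα)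
          omega
        have hval2 : ((p + s * L + k * Q : ℕ) : ZMod (α * M)).val = p + s * L + k * Q :=
          ZMod.val_cast_of_lt hlt2
        have hge2 : Q ≤ p + s * L + k * Q := by
          have : Q ≤ k * Q := by
            calc Q = 1 * Q := (one_mul Q).symm
            _ ≤ k * Q := Nat.mul_le_mul_right Q hk1
          omega
        rw [hGα ((p + s * L + k * Q : ℕ) : ZMod (α * M)), hval2, if_neg (by omega)]
        simp
      · -- first factor vanishes
        rw [hGα ((p + s * L : ℕ) : ZMod (α * M)), hval1, if_neg hq]
        simp
    rw [hzero, mul_zero]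
end

section
/- Constant filter length (Thm 5): Let M = KQ = LN with G : ZMod M → ℂ frequency confined (G(i)=0 for Q ≤ i ≤ M-1) and satisfying the orthogonality conditions of Corollary 1. Let α be a positive integer dividing both Q and L. Define G_α : ZMod M → ℂ by G_α(i) = √α · G(αi) for 0 ≤ i ≤ Q/α − 1 and G_α(i) = 0 otherwise. Then G_α satisfies the orthogonality conditions for parameters (αK, αN, M): (1/(αN)) Σ_{s=0}^{αN-1} |G_α(p + sL/α)|² = 1 for all p ∈ {0,...,L/α − 1}, and (1/(αN)) Σ_{s=0}^{αN-1} G_α(p + sL/α) conj(G_α(p + sL/α + kQ/α)) = 0 for all such p and all k ∈ {1,...,αK−1}. -/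
open Finset

private lemma sum_trunc12 {f : ℕ → ℂ} {N M : ℕ} (h : N ≤ M)
    (hz : ∀ s, N ≤ s → s < M → f s = 0) :
    ∑ s ∈ Finset.range M, f s = ∑ s ∈ Finset.range N, f s := by
  refine (Finset.sum_subset (Finset.range_subset_range.mpr h) ?_).symm
  intro s hs hns
  simp only [Finset.mem_range] at hs hns
  exact hz s (le_of_not_gt hns) hs

set_option maxHeartbeats 1000000 in
/-- Constant filter length: subsampling the spectrum of a frequency-confined
orthogonal pulse (scaled by `√α`) yields an orthogonal pulse for parameters
`(αK, αN, M)`. -/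
theorem stmt_12 (M K Q L N α : ℕ) (hKQ : M = K * Q) (hLN : M = L * N)
    (hK : 0 < K) (hQ : 0 < Q) (hL : 0 < L) (hN : 0 < N) (hα : 0 < α)
    (hαQ : α ∣ Q) (hαL : α ∣ L)
    (G : ZMod M → ℂ)
    (hconf : ∀ i : ZMod M, Q ≤ i.val → G i = 0)
    (hISI : ∀ p < L, (1 / (N : ℂ)) * ∑ s ∈ Finset.range N,
        G ((p + s * L : ℕ) : ZMod M) * (starRingEnd ℂ) (G ((p + s * L : ℕ) : ZMod M)) = 1)
    (hICI : ∀ p < L, ∀ k, 1 ≤ k → k < K →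
        (1 / (N : ℂ)) * ∑ s ∈ Finset.range N,
          G ((p + s * L : ℕ) : ZMod M) *
            (starRingEnd ℂ) (G ((p + s * L + k * Q : ℕ) : ZMod M)) = 0)
    (Gα : ZMod M → ℂ)
    (hGα : ∀ i : ZMod M,
      Gα i = if i.val < Q / α then (Real.sqrt α : ℂ) * G ((α * i.val : ℕ) : ZMod M) else 0) :
    (∀ p < L / α, (1 / ((α * N : ℕ) : ℂ)) * ∑ s ∈ Finset.range (α * N),
        Gα ((p + s * (L / α) : ℕ) : ZMod M) *
          (starRingEnd ℂ) (Gα ((p + s * (L / α) : ℕ) : ZMod M)) = 1) ∧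
    (∀ p < L / α, ∀ k, 1 ≤ k → k < α * K →
        (1 / ((α * N : ℕ) : ℂ)) * ∑ s ∈ Finset.range (α * N),
          Gα ((p + s * (L / α) : ℕ) : ZMod M) *
            (starRingEnd ℂ) (Gα ((p + s * (L / α) + k * (Q / α) : ℕ) : ZMod M)) = 0) := by
  obtain ⟨q, rfl⟩ := hαQ
  obtain ⟨l, rfl⟩ := hαL
  have hq0 : 0 < q := Nat.pos_of_ne_zero fun h => by simp [h] at hQ
  have hl0 : 0 < l := Nat.pos_of_ne_zero fun h => by simp [h] at hL
  have hM0 : 0 < M := by rw [hKQ]; positivity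
  haveI : NeZero M := ⟨hM0.ne'⟩
  have hQd : α * q / α = q := Nat.mul_div_cancel_left q hα
  have hLd : α * l / α = l := Nat.mul_div_cancel_left l hα
  have hKq : l * N = K * q := by
    have h : α * (l * N) = α * (K * q) := by
      calc α * (l * N) = α * l * N := by ring
        _ = M := hLN.symm
        _ = K * (α * q) := hKQ
        _ = α * (K * q) := by ring
    exact Nat.eq_of_mul_eq_mul_left hα h
  have hMlN : M = α * (l * N) := by rw [hLN]; ring
  have hqlN : q ≤ l * N := by rw [hKq]; exact Nat.le_mul_of_pos_left q hK
  have hval : ∀ n : ℕ, n < M → ((n : ZMod M)).val = n := fun n h =>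
    ZMod.val_natCast_of_lt h
  -- basic bound : p + s*l < l*N when p < l, s < N
  have hbound : ∀ p s, p < l → s < N → p + s * l < l * N := by
    intro p s hp hs
    calc p + s * l < l + s * l := Nat.add_lt_add_right hp _
      _ = (s + 1) * l := by ring
      _ ≤ N * l := Nat.mul_le_mul_right l hs
      _ = l * N := Nat.mul_comm _ _
  have hboundM : ∀ p s, p < l → s < α * N → p + s * l < M := by
    intro p s hp hs
    have hM' : M = α * N * l := by rw [hMlN]; ring
    rw [hM']
    calc p + s * l < l + s * l := Nat.add_lt_add_right hp _
      _ = (s + 1) * l := by ring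
      _ ≤ α * N * l := Nat.mul_le_mul_right l hs
  have hNle : N ≤ α * N := Nat.le_mul_of_pos_left N hα
  have hsq : ((Real.sqrt α : ℝ) : ℂ) * ((Real.sqrt α : ℝ) : ℂ) = (α : ℂ) := by
    rw [← Complex.ofReal_mul, Real.mul_self_sqrt (Nat.cast_nonneg α)]
    simp
  -- αn < M when p < l, s < N
  have hαnM : ∀ p s, p < l → s < N → α * (p + s * l) < M := by
    intro p s hp hs
    have h1 := hbound p s hp hs
    rw [hMlN]
    exact (Nat.mul_lt_mul_left hα).mpr h1
  -- Lemma A : first factor for s < N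
  have hA : ∀ p s, p < l → s < N →
      Gα ((p + s * l : ℕ) : ZMod M)
        = (Real.sqrt α : ℂ) * G ((α * p + s * (α * l) : ℕ) : ZMod M) := by
    intro p s hp hs
    have hn : p + s * l < M := hboundM p s hp (lt_of_lt_of_le hs hNle)
    have hcastarg : ((α * p + s * (α * l) : ℕ) : ZMod M) = ((α * (p + s * l) : ℕ) : ZMod M) := by
      congr 1; ring
    rw [hGα, hval _ hn, hQd, hcastarg]
    by_cases hc : p + s * l < q
    · rw [if_pos hc]
    · rw [if_neg hc]
      have hG0 : G ((α * (p + s * l) : ℕ) : ZMod M) = 0 := by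
        apply hconf
        rw [hval _ (hαnM p s hp hs)]
        exact Nat.mul_le_mul_left α (le_of_not_gt hc)
      rw [hG0, mul_zero]
  -- G (α p + s L) = 0 when q ≤ p + s*l (for s < N)
  have hG0 : ∀ p s, p < l → s < N → ¬ (p + s * l < q) →
      G ((α * p + s * (α * l) : ℕ) : ZMod M) = 0 := by
    intro p s hp hs hc
    have hcastarg : ((α * p + s * (α * l) : ℕ) : ZMod M) = ((α * (p + s * l) : ℕ) : ZMod M) := by
      congr 1; ring
    rw [hcastarg]
    apply hconf
    rw [hval _ (hαnM p s hp hs)]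
    exact Nat.mul_le_mul_left α (le_of_not_gt hc)
  -- Lemma Z : first factor vanishes for N ≤ s
  have hZ : ∀ p s, p < l → N ≤ s → s < α * N → Gα ((p + s * l : ℕ) : ZMod M) = 0 := by
    intro p s hp hs1 hs2
    have hn : p + s * l < M := hboundM p s hp hs2
    have hqn : q ≤ p + s * l := by
      calc q ≤ l * N := hqlN
        _ = N * l := Nat.mul_comm _ _
        _ ≤ s * l := Nat.mul_le_mul_right l hs1
        _ ≤ p + s * l := Nat.le_add_left _ _
    rw [hGα, hval _ hn, hQd, if_neg (not_lt.mpr hqn)]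
  -- Lemma B1 : second factor for k < K
  have hB1 : ∀ p s k, p < l → s < N → k < K → p + s * l < q →
      Gα ((p + s * l + k * q : ℕ) : ZMod M)
        = (Real.sqrt α : ℂ) * G ((α * p + s * (α * l) + k * (α * q) : ℕ) : ZMod M) := by
    intro p s k hp hs hkK hpq
    have hm : p + s * l + k * q < K * q := by
      calc p + s * l + k * q < q + k * q := Nat.add_lt_add_right hpq _
        _ = (k + 1) * q := by ring
        _ ≤ K * q := Nat.mul_le_mul_right q hkK
    have hmM : p + s * l + k * q < M := by
      calc p + s * l + k * q < K * q := hm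
        _ ≤ α * (K * q) := Nat.le_mul_of_pos_left _ hα
        _ = M := by rw [hKQ]; ring
    have hcast : ((α * p + s * (α * l) + k * (α * q) : ℕ) : ZMod M)
        = ((α * (p + s * l + k * q) : ℕ) : ZMod M) := by congr 1; ring
    rw [hGα, hval _ hmM, hQd, hcast]
    by_cases hc : p + s * l + k * q < q
    · rw [if_pos hc]
    · rw [if_neg hc]
      have hαm : α * (p + s * l + k * q) < M := by
        have hM' : M = α * (K * q) := by rw [hKQ]; ring
        rw [hM']
        exact (Nat.mul_lt_mul_left hα).mpr hm
      have hz : G ((α * (p + s * l + k * q) : ℕ) : ZMod M) = 0 := by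
        apply hconf
        rw [hval _ hαm]
        exact Nat.mul_le_mul_left α (le_of_not_gt hc)
      rw [hz, mul_zero]
  -- Lemma B2 : second factor vanishes for K ≤ k (on the support of the first factor)
  have hB2 : ∀ p s k, p < l → s < N → K ≤ k → k < α * K → p + s * l < q →
      Gα ((p + s * l + k * q : ℕ) : ZMod M) = 0 := by
    intro p s k hp hs hKk hk hpq
    have hmM : p + s * l + k * q < M := by
      have hM' : M = α * K * q := by rw [hKQ]; ring
      rw [hM']
      calc p + s * l + k * q < q + k * q := Nat.add_lt_add_right hpq _
        _ = (k + 1) * q := by ring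
        _ ≤ α * K * q := Nat.mul_le_mul_right q hk
    have hqm : q ≤ p + s * l + k * q :=
      le_trans (le_trans (Nat.le_mul_of_pos_left q hK) (Nat.mul_le_mul_right q hKk))
        (Nat.le_add_left _ _)
    rw [hGα, hval _ hmM, hQd, if_neg (not_lt.mpr hqm)]
  have hNC : (N : ℂ) ≠ 0 := Nat.cast_ne_zero.mpr hN.ne'
  have hαC : (α : ℂ) ≠ 0 := Nat.cast_ne_zero.mpr hα.ne'
  constructor
  · -- ISI
    intro p hp
    rw [hLd] at hp
    simp only [hLd]
    have hαp : α * p < α * l := (Nat.mul_lt_mul_left hα).mpr hp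
    have hISI' := hISI (α * p) hαp
    have hsub : ∑ s ∈ Finset.range (α * N),
        Gα ((p + s * l : ℕ) : ZMod M) * (starRingEnd ℂ) (Gα ((p + s * l : ℕ) : ZMod M))
        = ∑ s ∈ Finset.range N,
        Gα ((p + s * l : ℕ) : ZMod M) * (starRingEnd ℂ) (Gα ((p + s * l : ℕ) : ZMod M)) :=
      sum_trunc12 hNle (fun s hs1 hs2 => by rw [hZ p s hp hs1 hs2, zero_mul])
    rw [hsub]
    have hterm : ∀ s ∈ Finset.range N,
        Gα ((p + s * l : ℕ) : ZMod M) * (starRingEnd ℂ) (Gα ((p + s * l : ℕ) : ZMod M))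
        = (α : ℂ) * (G ((α * p + s * (α * l) : ℕ) : ZMod M) *
            (starRingEnd ℂ) (G ((α * p + s * (α * l) : ℕ) : ZMod M))) := by
      intro s hs
      rw [Finset.mem_range] at hs
      rw [hA p s hp hs, map_mul, Complex.conj_ofReal, mul_mul_mul_comm, hsq]
    rw [Finset.sum_congr rfl hterm, ← Finset.mul_sum]
    have hS : ∑ s ∈ Finset.range N, G ((α * p + s * (α * l) : ℕ) : ZMod M) *
        (starRingEnd ℂ) (G ((α * p + s * (α * l) : ℕ) : ZMod M)) = (N : ℂ) := by
      rwa [one_div_mul_eq_div, div_eq_one_iff_eq hNC] at hISI'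
    rw [hS]
    push_cast
    field_simp
  · -- ICI
    intro p hp k hk1 hk2
    rw [hLd] at hp
    simp only [hLd, hQd]
    rcases lt_or_ge k K with hkK | hkK
    · have hαp : α * p < α * l := (Nat.mul_lt_mul_left hα).mpr hp
      have hICI' := hICI (α * p) hαp k hk1 hkK
      have hsub : ∑ s ∈ Finset.range (α * N),
          Gα ((p + s * l : ℕ) : ZMod M) *
            (starRingEnd ℂ) (Gα ((p + s * l + k * q : ℕ) : ZMod M))
          = ∑ s ∈ Finset.range N,
          Gα ((p + s * l : ℕ) : ZMod M) *
            (starRingEnd ℂ) (Gα ((p + s * l + k * q : ℕ) : ZMod M)) :=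
        sum_trunc12 hNle (fun s hs1 hs2 => by rw [hZ p s hp hs1 hs2, zero_mul])
      rw [hsub]
      have hterm : ∀ s ∈ Finset.range N,
          Gα ((p + s * l : ℕ) : ZMod M) *
            (starRingEnd ℂ) (Gα ((p + s * l + k * q : ℕ) : ZMod M))
          = (α : ℂ) * (G ((α * p + s * (α * l) : ℕ) : ZMod M) *
              (starRingEnd ℂ) (G ((α * p + s * (α * l) + k * (α * q) : ℕ) : ZMod M))) := by
        intro s hs
        rw [Finset.mem_range] at hs
        rw [hA p s hp hs]
        by_cases hpq : p + s * l < q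
        · rw [hB1 p s k hp hs hkK hpq, map_mul, Complex.conj_ofReal, mul_mul_mul_comm, hsq]
        · rw [hG0 p s hp hs hpq]
          simp
      rw [Finset.sum_congr rfl hterm, ← Finset.mul_sum]
      have hS : ∑ s ∈ Finset.range N, G ((α * p + s * (α * l) : ℕ) : ZMod M) *
          (starRingEnd ℂ) (G ((α * p + s * (α * l) + k * (α * q) : ℕ) : ZMod M)) = 0 := by
        rw [one_div_mul_eq_div, div_eq_zero_iff] at hICI'
        exact hICI'.resolve_right hNC
      rw [hS, mul_zero, mul_zero]
    · have hzero : ∀ s ∈ Finset.range (α * N),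
          Gα ((p + s * l : ℕ) : ZMod M) *
            (starRingEnd ℂ) (Gα ((p + s * l + k * q : ℕ) : ZMod M)) = 0 := by
        intro s hs
        rw [Finset.mem_range] at hs
        rcases lt_or_ge s N with hsN | hsN
        · by_cases hpq : p + s * l < q
          · rw [hB2 p s k hp hsN hkK hk2 hpq, map_zero, mul_zero]
          · rw [hA p s hp hsN, hG0 p s hp hsN hpq, mul_zero, zero_mul]
        · rw [hZ p s hp hsN hs, zero_mul]
      rw [Finset.sum_eq_zero hzero, mul_zero]
end
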